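/- Under the assumptions of the multiple-cutoff fuzzy RDD (finitely many cutoff rules c_1 < ... < c_n; always-takers always treated, never-takers never treated; compliers treated iff X ≥ R; continuity in x of P(C_T | X=x, R=r), P(R=r | X=x), and E[Y^(t,r) | X=x, R=r, C_T]; and P(C_T=C, R=c_i | X=c_i) > 0), the discontinuity in the conditional mean outcome at c_i satisfies: lim_{x↓c_i} E[Y|X=x] − lim_{x↑c_i} E[Y|X=x] = (E[Y^(1,c_i) | X=c_i, R=c_i, C_T=C] − E[Y^(0,c_i) | X=c_i, R=c_i, C_T=C]) · P(C_T=C, R=c_i | X=c_i). Consequently, E[Y^(1,c_i) − Y^(0,c_i) | X=c_i, C_T=C, R=c_i] = (lim_{x↓c_i} E[Y|X=x] − lim_{x↑c_i} E[Y|X=x]) / (lim_{x↓c_i} P(T=1|X=x) − lim_{x↑c_i} P(T=1|X=x)). -/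
import Mathlib


open Filter Set Finset

/-- Compliance types: always-taker, never-taker, complier. -/
inductive ComplianceType | A | N | C
deriving DecidableEq

/-- **Identification in the multiple-cutoff fuzzy RDD.**
With cutoff rules `c 0 < ... < c (n-1)`, joint type/rule probabilities
`pA, pN, pC` continuous in `x`, conditional potential-outcome means
`mE t j ct` continuous in `x` (`t = true` for treatment, `false` for control),
the observed conditional mean `μ` and treatment probability `pT` decomposing
by the law of total expectation (always-takers always treated, never-takers
never, compliers treated iff `x ≥ c_j`), and a positive fraction
`pC i (c i) = P(C_T = C, R = c_i | X = c_i) > 0` of compliers using rule `c_i`,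
the jump of `μ` at `c i` equals the complier treatment effect times
`pC i (c i)`, and consequently the treatment effect
`E[Y^(1,c_i) - Y^(0,c_i) | X = c_i, C_T = C, R = c_i]` equals the ratio of the
outcome jump to the treatment probability jump. -/
theorem multiple_cutoff_identification
    (n : ℕ) (c : Fin n → ℝ) (hc : StrictMono c) (i : Fin n)
    (pA pN pC : Fin n → ℝ → ℝ)
    (hpA : ∀ j, Continuous (pA j)) (hpN : ∀ j, Continuous (pN j))
    (hpC : ∀ j, Continuous (pC j))
    (mE : Bool → Fin n → ComplianceType → ℝ → ℝ)
    (hmE : ∀ t j ct, Continuous (mE t j ct))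
    (μ pT : ℝ → ℝ)
    (hμ : ∀ x, μ x = ∑ j : Fin n,
      (mE true j ComplianceType.A x * pA j x
        + mE false j ComplianceType.N x * pN j x
        + (if c j ≤ x then mE true j ComplianceType.C x
            else mE false j ComplianceType.C x) * pC j x))
    (hpT : ∀ x, pT x = ∑ j : Fin n, (pA j x + (if c j ≤ x then pC j x else 0)))
    (hpos : 0 < pC i (c i)) :
    ∀ μR μL pR pL : ℝ,
      Tendsto μ (nhdsWithin (c i) (Ioi (c i))) (nhds μR) →
      Tendsto μ (nhdsWithin (c i) (Iio (c i))) (nhds μL) →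
      Tendsto pT (nhdsWithin (c i) (Ioi (c i))) (nhds pR) →
      Tendsto pT (nhdsWithin (c i) (Iio (c i))) (nhds pL) →
      μR - μL = (mE true i ComplianceType.C (c i)
          - mE false i ComplianceType.C (c i)) * pC i (c i) ∧
      mE true i ComplianceType.C (c i) - mE false i ComplianceType.C (c i)
        = (μR - μL) / (pR - pL) := by
  intro μR μL pR pL hμR hμL hpR hpL
  set ci := c i with hci
  -- eventual constancy of the indicators on each side
  have keyR : ∀ᶠ x in nhdsWithin ci (Ioi ci), ∀ j : Fin n, ((c j ≤ x) ↔ (c j ≤ ci)) := by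
    rw [Filter.eventually_all]
    intro j
    by_cases h : c j ≤ ci
    · filter_upwards [self_mem_nhdsWithin] with x hx
      simp only [Set.mem_Iio, Set.mem_Ioi] at hx
      simp [h, le_trans h (le_of_lt hx)]
    · push_neg at h
      filter_upwards [mem_nhdsWithin_of_mem_nhds (Iio_mem_nhds h)] with x hx
      simp only [Set.mem_Iio, Set.mem_Ioi] at hx
      simp [not_le.2 hx, not_le.2 h]
  have keyL : ∀ᶠ x in nhdsWithin ci (Iio ci), ∀ j : Fin n, ((c j ≤ x) ↔ (c j < ci)) := by
    rw [Filter.eventually_all]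
    intro j
    by_cases h : c j < ci
    · filter_upwards [mem_nhdsWithin_of_mem_nhds (Ioi_mem_nhds h)] with x hx
      simp only [Set.mem_Iio, Set.mem_Ioi] at hx
      simp [le_of_lt hx, h]
    · push_neg at h
      filter_upwards [self_mem_nhdsWithin] with x hx
      simp only [Set.mem_Iio, Set.mem_Ioi] at hx
      simp [not_le.2 (lt_of_lt_of_le hx h), not_lt.2 h]
  -- limit functions
  set fR : ℝ → ℝ := fun x => ∑ j : Fin n,
      (mE true j ComplianceType.A x * pA j x
        + mE false j ComplianceType.N x * pN j x
        + (if c j ≤ ci then mE true j ComplianceType.C x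
            else mE false j ComplianceType.C x) * pC j x) with hfR
  set fL : ℝ → ℝ := fun x => ∑ j : Fin n,
      (mE true j ComplianceType.A x * pA j x
        + mE false j ComplianceType.N x * pN j x
        + (if c j < ci then mE true j ComplianceType.C x
            else mE false j ComplianceType.C x) * pC j x) with hfL
  have hfRc : Continuous fR := by
    apply continuous_finset_sum
    intro j _
    exact (((hmE true j .A).mul (hpA j)).add ((hmE false j .N).mul (hpN j))).add
      (by split_ifs <;> exact (hmE _ j .C).mul (hpC j))
  have hfLc : Continuous fL := by
    apply continuous_finset_sum
    intro j _
    exact (((hmE true j .A).mul (hpA j)).add ((hmE false j .N).mul (hpN j))).add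
      (by split_ifs <;> exact (hmE _ j .C).mul (hpC j))
  set gR : ℝ → ℝ := fun x => ∑ j : Fin n,
      (pA j x + (if c j ≤ ci then pC j x else 0)) with hgR
  set gL : ℝ → ℝ := fun x => ∑ j : Fin n,
      (pA j x + (if c j < ci then pC j x else 0)) with hgL
  have hgRc : Continuous gR := by
    apply continuous_finset_sum
    intro j _
    exact (hpA j).add (by split_ifs; exact hpC j; exact continuous_const)
  have hgLc : Continuous gL := by
    apply continuous_finset_sum
    intro j _
    exact (hpA j).add (by split_ifs; exact hpC j; exact continuous_const)
  -- identify limits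
  have hμR' : μR = fR ci := by
    refine tendsto_nhds_unique hμR ?_
    refine Tendsto.congr' ?_ ((hfRc.tendsto ci).mono_left nhdsWithin_le_nhds)
    filter_upwards [keyR] with x hx
    rw [hfR, hμ x]
    exact Finset.sum_congr rfl fun j _ => by
      rw [if_congr (hx j) rfl rfl]
  have hμL' : μL = fL ci := by
    refine tendsto_nhds_unique hμL ?_
    refine Tendsto.congr' ?_ ((hfLc.tendsto ci).mono_left nhdsWithin_le_nhds)
    filter_upwards [keyL] with x hx
    rw [hfL, hμ x]
    exact Finset.sum_congr rfl fun j _ => by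
      rw [if_congr (hx j) rfl rfl]
  have hpR' : pR = gR ci := by
    refine tendsto_nhds_unique hpR ?_
    refine Tendsto.congr' ?_ ((hgRc.tendsto ci).mono_left nhdsWithin_le_nhds)
    filter_upwards [keyR] with x hx
    rw [hgR, hpT x]
    exact Finset.sum_congr rfl fun j _ => by
      rw [if_congr (hx j) rfl rfl]
  have hpL' : pL = gL ci := by
    refine tendsto_nhds_unique hpL ?_
    refine Tendsto.congr' ?_ ((hgLc.tendsto ci).mono_left nhdsWithin_le_nhds)
    filter_upwards [keyL] with x hx
    rw [hgL, hpT x]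
    exact Finset.sum_congr rfl fun j _ => by
      rw [if_congr (hx j) rfl rfl]
  have hne : ∀ j : Fin n, j ≠ i → ((c j ≤ ci) ↔ (c j < ci)) := by
    intro j hj
    have : c j ≠ ci := fun h => hj (hc.injective h)
    constructor
    · exact fun h => lt_of_le_of_ne h this
    · exact le_of_lt
  -- the jump in μ
  have hjump : μR - μL = (mE true i ComplianceType.C ci
      - mE false i ComplianceType.C ci) * pC i ci := by
    rw [hμR', hμL', hfR, hfL]
    simp only
    rw [← Finset.sum_sub_distrib]
    rw [Finset.sum_eq_single i]
    · rw [if_pos le_rfl, if_neg (lt_irrefl _)]; ring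
    · intro j _ hj
      rw [if_congr (hne j hj) rfl rfl]
      ring
    · simp
  have hpjump : pR - pL = pC i ci := by
    rw [hpR', hpL', hgR, hgL]
    simp only
    rw [← Finset.sum_sub_distrib]
    rw [Finset.sum_eq_single i]
    · rw [if_pos le_rfl, if_neg (lt_irrefl _)]; ring
    · intro j _ hj
      rw [if_congr (hne j hj) rfl rfl]
      ring
    · simp
  refine ⟨hjump, ?_⟩
  rw [hjump, hpjump, mul_div_assoc, div_self (ne_of_gt hpos), mul_one]
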